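/- arXiv:1207.3976 — 4 statements merged into one kernel-verified Lean document; each statement's English description precedes it below -/
import Mathlib

section
/- Let α > 1 and let e have weight w(e) ∈ [α^i, α^{i+1}). If two edges e₁*, e₂* have weights in [α^i, α^{i+1}) and finitely many other edges have, for each level j < i, at most two edges with weight in [α^j, α^{j+1}), then the total weight of all these edges is strictly less than w(e)·(2α/(α−1) + 2α). -/
/-!
Bound each weight by the top `α ^ (j + 1)` of its level `j`; with at most two edges per level the
total is at most `2 ∑_{L ≤ j ≤ i} α ^ (j + 1)`, a geometric series strictly below
`2 α ^ (i + 2) / (α - 1) = α ^ i (2α / (α - 1) + 2α) ≤ w (2α / (α - 1) + 2α)`.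
-/

open Finset

lemma sub_one_mul_sum_Ico_zpow {α : ℝ} (hα : α ≠ 0) {L n : ℤ} (h : L ≤ n) :
    (α - 1) * ∑ j ∈ Ico L n, α ^ j = α ^ n - α ^ L := by
  induction n, h using Int.leInduction with
  | base => simp
  | succ n hLn ih =>
    rw [← sum_Ico_add_eq_sum_Ico_add_one hLn, mul_add, ih, zpow_add_one₀ hα]
    ring

lemma sum_Icc_zpow_lt {α : ℝ} (hα : 1 < α) (L i : ℤ) :
    ∑ j ∈ Icc L i, α ^ j < α ^ (i + 1) / (α - 1) := by
  have hα1 : 0 < α - 1 := sub_pos.2 hα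
  rw [lt_div_iff₀ hα1, mul_comm, ← Ico_add_one_right_eq_Icc]
  rcases le_or_gt L (i + 1) with h | h
  · rw [sub_one_mul_sum_Ico_zpow (by positivity) h]
    linarith [zpow_pos (by positivity : 0 < α) L]
  · rw [Ico_eq_empty_of_le h.le, sum_empty, mul_zero]
    positivity

lemma sum_comp_le_mul_sum_of_card_fiber_le {ι κ : Type*} [Fintype ι] [DecidableEq κ]
    {f : ι → κ} {t : Finset κ} (hf : ∀ s, f s ∈ t) {k : ℕ}
    (hk : ∀ j, #{s | f s = j} ≤ k) {g : κ → ℝ} (hg : ∀ j ∈ t, 0 ≤ g j) :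
    ∑ s, g (f s) ≤ k * ∑ j ∈ t, g j := by
  rw [← sum_fiberwise_of_maps_to (fun s _ => hf s), mul_sum]
  refine sum_le_sum fun j hj => ?_
  calc ∑ s with f s = j, g (f s) = #{s | f s = j} * g j := by
        rw [sum_congr rfl fun s hs => congrArg g (mem_filter.1 hs).2, sum_const, nsmul_eq_mul]
    _ ≤ k * g j := mul_le_mul_of_nonneg_right (by exact_mod_cast hk j) (hg j hj)

/-- A collection of mapped edges, indexed by a finite type, each with an integer level
between `L` and `i`, at most two edges per level, and weights within the level's range. -/
theorem stmt_2 (α : ℝ) (hα : 1 < α) (i L : ℤ) (w : ℝ)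
    (hw : α ^ i ≤ w ∧ w < α ^ (i + 1))
    (ι : Type*) [Fintype ι] (ws : ι → ℝ) (lvl : ι → ℤ)
    (hlvl : ∀ s : ι, L ≤ lvl s ∧ lvl s ≤ i)
    (hcount : ∀ j : ℤ, {s : ι | lvl s = j}.ncard ≤ 2)
    (hws : ∀ s : ι, α ^ (lvl s) ≤ ws s ∧ ws s < α ^ (lvl s + 1)) :
    ∑ s : ι, ws s < w * (2 * α / (α - 1) + 2 * α) := by
  have hα0 : 0 < α := by linarith
  have hα1 : 0 < α - 1 := by linarith
  have hfiber (j : ℤ) : #{s | lvl s = j} ≤ 2 := by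
    simpa [Set.ncard_eq_toFinset_card'] using hcount j
  have hconst : 2 * α / (α - 1) + 2 * α = 2 * α ^ 2 / (α - 1) := by
    field_simp
    ring
  calc ∑ s, ws s ≤ ∑ s, α ^ (lvl s + 1) := sum_le_sum fun s _ => (hws s).2.le
    _ ≤ (2 : ℕ) * ∑ j ∈ Icc L i, α ^ (j + 1) :=
      sum_comp_le_mul_sum_of_card_fiber_le (g := fun j => α ^ (j + 1))
        (fun s => mem_Icc.2 (hlvl s)) hfiber
        fun j _ => by positivity
    _ = 2 * α * ∑ j ∈ Icc L i, α ^ j := by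
      simp only [zpow_add_one₀ hα0.ne', ← sum_mul]
      push_cast
      ring
    _ < 2 * α * (α ^ (i + 1) / (α - 1)) := by
      gcongr
      exact sum_Icc_zpow_lt hα L i
    _ = α ^ i * (2 * α / (α - 1) + 2 * α) := by
      rw [hconst, zpow_add_one₀ hα0.ne']
      ring
    _ ≤ w * (2 * α / (α - 1) + 2 * α) := by
      gcongr
      exact hw.1
end

section
/- If M is a maximal matching in a weighted graph G all of whose edge weights lie in [α^i, α^{i+1}) for some α > 1 and integer i, then w(M*) ≤ 2α·w(M), where M* is a maximum weight matching of G. -/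
/-!
Maximality of `M` means every edge of `G` meets an edge of `M`. Choosing for each edge of `M*` a
shared vertex is injective, since `M*` is a matching, and lands among the at most `2|M|` vertices
covered by `M`; so `|M*| ≤ 2|M|`. As all weights lie in `[α^i, α^(i+1))`,
`w(M*) ≤ |M*| α^(i+1) ≤ 2α |M| α^i ≤ 2α w(M)`.
-/

/-- `M` is a matching in `G`: a set of edges of `G`, no two of which share a vertex. -/
def IsMatchingIn {V : Type*} (G : SimpleGraph V) (M : Finset (Sym2 V)) : Prop :=
  (↑M ⊆ G.edgeSet) ∧ ∀ e ∈ M, ∀ f ∈ M, e ≠ f → ∀ v : V, v ∈ e → v ∉ f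

/-- `M` is a maximal matching in `G`: no edge of `G` can be added keeping it a matching. -/
def IsMaximalMatchingIn {V : Type*} [DecidableEq V] (G : SimpleGraph V) (M : Finset (Sym2 V)) : Prop :=
  IsMatchingIn G M ∧ ∀ e ∈ G.edgeSet, e ∉ M → ¬ IsMatchingIn G (insert e M)

open Finset

theorem Sym2.card_toFinset_le_two {α : Type*} [DecidableEq α] (z : Sym2 α) :
    #z.toFinset ≤ 2 := by
  rw [Sym2.card_toFinset]
  split_ifs <;> omega

theorem Finset.card_biUnion_sym2_toFinset_le {α : Type*} [DecidableEq α] (M : Finset (Sym2 α)) :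
    #(M.biUnion Sym2.toFinset) ≤ 2 * #M :=
  calc #(M.biUnion Sym2.toFinset) ≤ ∑ f ∈ M, #f.toFinset := card_biUnion_le
    _ ≤ ∑ _f ∈ M, 2 := sum_le_sum fun f _ => f.card_toFinset_le_two
    _ = 2 * #M := by rw [sum_const, smul_eq_mul, mul_comm]

section Matching

variable {V : Type*} {G : SimpleGraph V}

theorem IsMatchingIn.insert [DecidableEq V] {M : Finset (Sym2 V)} {e : Sym2 V}
    (hM : IsMatchingIn G M) (he : e ∈ G.edgeSet) (hdisj : ∀ f ∈ M, ∀ v ∈ e, v ∉ f) :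
    IsMatchingIn G (insert e M) := by
  refine ⟨?_, ?_⟩
  · rw [coe_insert]
    exact Set.insert_subset he hM.1
  · intro a ha b hb hab v hva hvb
    rcases mem_insert.1 ha with rfl | ha <;> rcases mem_insert.1 hb with hbe | hb
    · exact hab hbe.symm
    · exact hdisj b hb v hva hvb
    · exact hdisj a ha v (hbe ▸ hvb) hva
    · exact hM.2 a ha b hb hab v hva hvb

theorem IsMatchingIn.injOn_of_mem {N : Finset (Sym2 V)} (hN : IsMatchingIn G N)
    {g : Sym2 V → V} (hg : ∀ e ∈ N, g e ∈ e) : Set.InjOn g N := by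
  intro a ha b hb hab
  by_contra hne
  exact hN.2 a ha b hb hne (g a) (hg a ha) (hab ▸ hg b hb)

variable [DecidableEq V]

theorem IsMaximalMatchingIn.exists_mem_mem_of_mem_edgeSet {M : Finset (Sym2 V)}
    (hM : IsMaximalMatchingIn G M) {e : Sym2 V} (he : e ∈ G.edgeSet) :
    ∃ v ∈ e, ∃ f ∈ M, v ∈ f := by
  by_cases heM : e ∈ M
  · exact ⟨e.out.1, e.out_fst_mem, e, heM, e.out_fst_mem⟩
  · by_contra! hdisj
    exact hM.2 e he heM (hM.1.insert he fun f hf v hv => hdisj v hv f hf)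

theorem IsMaximalMatchingIn.card_le_two_mul {M N : Finset (Sym2 V)}
    (hM : IsMaximalMatchingIn G M) (hN : IsMatchingIn G N) : #N ≤ 2 * #M := by
  have hcover (e : Sym2 V) : ∃ v ∈ e, e ∈ N → ∃ f ∈ M, v ∈ f := by
    by_cases he : e ∈ N
    · obtain ⟨v, hve, hv⟩ := hM.exists_mem_mem_of_mem_edgeSet (hN.1 he)
      exact ⟨v, hve, fun _ => hv⟩
    · exact ⟨e.out.1, e.out_fst_mem, fun h => absurd h he⟩
  choose g hg_mem hg_cover using hcover
  have hmaps : Set.MapsTo g N (M.biUnion Sym2.toFinset : Set V) := fun e he => by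
    obtain ⟨f, hf, hgf⟩ := hg_cover e he
    exact mem_coe.2 (mem_biUnion.2 ⟨f, hf, Sym2.mem_toFinset.2 hgf⟩)
  exact (card_le_card_of_injOn g hmaps (hN.injOn_of_mem fun e _ => hg_mem e)).trans
    M.card_biUnion_sym2_toFinset_le

end Matching

theorem stmt_3_general {V : Type*} [DecidableEq V] (G : SimpleGraph V)
    (w : Sym2 V → ℝ) (α : ℝ) (hα : 1 < α) (i : ℤ)
    (hw : ∀ e ∈ G.edgeSet, α ^ i ≤ w e ∧ w e < α ^ (i + 1))
    (M Mstar : Finset (Sym2 V))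
    (hM : IsMaximalMatchingIn G M)
    (hMstar : IsMatchingIn G Mstar) :
    ∑ e ∈ Mstar, w e ≤ 2 * α * ∑ e ∈ M, w e := by
  have hα₀ : 0 < α := one_pos.trans hα
  have hcard : (#Mstar : ℝ) ≤ 2 * #M := by exact_mod_cast hM.card_le_two_mul hMstar
  have hupper : ∑ e ∈ Mstar, w e ≤ #Mstar * α ^ (i + 1) := by
    simpa only [nsmul_eq_mul] using
      sum_le_card_nsmul Mstar w _ fun e he => (hw e (hMstar.1 he)).2.le
  have hlower : #M * α ^ i ≤ ∑ e ∈ M, w e := by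
    simpa only [nsmul_eq_mul] using
      card_nsmul_le_sum M w _ fun e he => (hw e (hM.1.1 he)).1
  calc ∑ e ∈ Mstar, w e ≤ #Mstar * α ^ (i + 1) := hupper
    _ ≤ 2 * #M * α ^ (i + 1) := by gcongr
    _ = 2 * α * (#M * α ^ i) := by rw [zpow_add_one₀ hα₀.ne']; ring
    _ ≤ 2 * α * ∑ e ∈ M, w e := by gcongr

theorem stmt_3 {V : Type*} [Fintype V] [DecidableEq V] (G : SimpleGraph V)
    (w : Sym2 V → ℝ) (α : ℝ) (hα : 1 < α) (i : ℤ)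
    (hw : ∀ e ∈ G.edgeSet, α ^ i ≤ w e ∧ w e < α ^ (i + 1))
    (M Mstar : Finset (Sym2 V))
    (hM : IsMaximalMatchingIn G M)
    (hMstar : IsMatchingIn G Mstar)
    (hmax : ∀ N : Finset (Sym2 V), IsMatchingIn G N → ∑ e ∈ N, w e ≤ ∑ e ∈ Mstar, w e) :
    ∑ e ∈ Mstar, w e ≤ 2 * α * ∑ e ∈ M, w e :=
  stmt_3_general G w α hα i hw M Mstar hM hMstar
end

section
/- The function h(α) = 2α²·ln(α)/(α−1)² on (1, ∞) has a critical point α₀ satisfying (α₀ − 1) = 2·ln(α₀), i.e., h'(α₀) = 0, with α₀ ∈ (3.51, 3.52), and h(α₀) < 4.92. -/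
/-! Since `h'(α) = 2α(α - 1 - 2 log α)/(α - 1)³`, the critical points of `h` on `(1, ∞)` are the
roots of `α - 1 = 2 log α`; one lies in `(3.51, 3.52)` by the intermediate value theorem and
bounds on `exp 1.255` and `exp 1.26`. At such a root `log α = (α - 1)/2`, so `h(α) = α²/(α - 1)`,
which is below `4.92` on that interval. -/

open Real Set

lemma hasDerivAt_two_mul_sq_mul_log_div_sub_one_sq {α : ℝ} (h0 : α ≠ 0) (h1 : α ≠ 1) :
    HasDerivAt (fun x => 2 * x ^ 2 * log x / (x - 1) ^ 2)
      (2 * α * (α - 1 - 2 * log α) / (α - 1) ^ 3) α := by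
  have hsub : α - 1 ≠ 0 := sub_ne_zero.mpr h1
  have hquot : HasDerivAt (fun x => 2 * x ^ 2 * log x / (x - 1) ^ 2) _ α :=
    (((hasDerivAt_pow 2 α).const_mul 2).mul (hasDerivAt_log h0)).div
      (((hasDerivAt_id α).sub_const 1).pow 2) (pow_ne_zero 2 hsub)
  convert hquot using 1
  simp only [id, Pi.mul_apply]
  field_simp
  ring

lemma two_mul_sq_mul_log_div_sub_one_sq_of_sub_one_eq {α : ℝ} (h1 : α ≠ 1)
    (hα : α - 1 = 2 * log α) : 2 * α ^ 2 * log α / (α - 1) ^ 2 = α ^ 2 / (α - 1) := by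
  have hsub : α - 1 ≠ 0 := sub_ne_zero.mpr h1
  rw [show log α = (α - 1) / 2 by linarith]
  field_simp

lemma exp_1255_lt : exp 1.255 < 3.51 := by
  have htail := exp_bound' (x := 0.255) (by norm_num) (by norm_num) (n := 5) (by norm_num)
  norm_num [Finset.sum_range_succ, Nat.factorial] at htail
  rw [show (1.255 : ℝ) = 1 + 0.255 by norm_num, exp_add]
  nlinarith [exp_one_lt_d9, exp_pos 0.255, exp_pos 1]

lemma lt_exp_126 : 3.52 < exp 1.26 := by
  have hsum := sum_le_exp_of_nonneg (x := 0.26) (by norm_num) 5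
  norm_num [Finset.sum_range_succ, Nat.factorial] at hsum
  rw [show (1.26 : ℝ) = 1 + 0.26 by norm_num, exp_add]
  nlinarith [exp_one_gt_d9, exp_pos 0.26, exp_pos 1]

lemma exists_mem_Ioo_sub_one_eq_two_mul_log :
    ∃ α ∈ Ioo (3.51 : ℝ) 3.52, α - 1 = 2 * log α := by
  have hcont : ContinuousOn (fun x : ℝ => x - 1 - 2 * log x) (Icc 3.51 3.52) :=
    (continuousOn_id.sub continuousOn_const).sub
      (continuousOn_const.mul (continuousOn_log.mono fun x hx => by
        simp only [mem_compl_iff, mem_singleton_iff]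
        linarith [hx.1]))
  have hlow : 1.255 < log 3.51 := (lt_log_iff_exp_lt (by norm_num)).mpr exp_1255_lt
  have hhigh : log 3.52 < 1.26 := (log_lt_iff_lt_exp (by norm_num)).mpr lt_exp_126
  obtain ⟨α, hα, hroot⟩ := intermediate_value_Ioo (by norm_num) hcont
    (show (0 : ℝ) ∈ Ioo _ _ from ⟨by linarith, by linarith⟩)
  exact ⟨α, hα, by linarith [show α - 1 - 2 * log α = 0 from hroot]⟩

theorem stmt_11 (h : ℝ → ℝ)
    (hh : ∀ α : ℝ, 1 < α → h α = 2 * α ^ 2 * Real.log α / (α - 1) ^ 2) :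
    ∃ α₀ : ℝ, 3.51 < α₀ ∧ α₀ < 3.52 ∧ α₀ - 1 = 2 * Real.log α₀ ∧
      deriv h α₀ = 0 ∧ h α₀ < 4.92 := by
  obtain ⟨α₀, ⟨hlow, hhigh⟩, hroot⟩ := exists_mem_Ioo_sub_one_eq_two_mul_log
  have hα₀ : 1 < α₀ := by linarith
  have heq : h =ᶠ[nhds α₀] fun x => 2 * x ^ 2 * log x / (x - 1) ^ 2 :=
    Filter.eventually_of_mem (Ioi_mem_nhds hα₀) hh
  refine ⟨α₀, hlow, hhigh, hroot, ?_, ?_⟩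
  · rw [((hasDerivAt_two_mul_sq_mul_log_div_sub_one_sq (by positivity) hα₀.ne').congr_of_eventuallyEq
      heq).deriv, hroot]
    ring
  · rw [hh α₀ hα₀, two_mul_sq_mul_log_div_sub_one_sq_of_sub_one_eq hα₀.ne' hroot,
      div_lt_iff₀ (by linarith)]
    nlinarith
end

section
/- For α > 1, the function h(α) = 2α²·ln(α)/(α−1)² satisfies h(α) < 8 for α = 3.512; in particular the randomized-rounding ratio at α = 3.512 is strictly better than the deterministic ratio 8 obtained from f(α) = 2α/(α−1) + 2α at α = 2. -/
/-! Since `e > 2`, `log α < 2` for `α ≤ 4`, so `h 3.512 < 4 · 3.512² / 2.512² < 8`. -/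

theorem Real.log_lt_two_of_le_four {x : ℝ} (hx₀ : 0 < x) (hx : x ≤ 4) : Real.log x < 2 := by
  rw [Real.log_lt_iff_lt_exp hx₀]
  have hexp_one : 2 < Real.exp 1 := by simpa [one_add_one_eq_two] using Real.add_one_lt_exp one_ne_zero
  calc x ≤ 2 * 2 := by linarith
    _ < Real.exp 1 * Real.exp 1 := by gcongr
    _ = Real.exp 2 := by rw [← Real.exp_add, one_add_one_eq_two]

theorem stmt_12 (h f : ℝ → ℝ)
    (hh : ∀ α : ℝ, 1 < α → h α = 2 * α ^ 2 * Real.log α / (α - 1) ^ 2)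
    (hf : ∀ α : ℝ, 1 < α → f α = 2 * α / (α - 1) + 2 * α) :
    h 3.512 < 8 ∧ f 2 = 8 ∧ h 3.512 < f 2 := by
  have hlog : Real.log 3.512 < 2 := Real.log_lt_two_of_le_four (by norm_num) (by norm_num)
  have hh_lt : h 3.512 < 8 := by
    rw [hh 3.512 (by norm_num), div_lt_iff₀ (by norm_num)]
    nlinarith
  have hf_eq : f 2 = 8 := by
    rw [hf 2 (by norm_num)]
    norm_num
  exact ⟨hh_lt, hf_eq, hf_eq ▸ hh_lt⟩
end
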